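/- Let (Ω, ℱ, ℙ, S) be a measure-preserving system on a probability space and suppose that for every F ∈ L¹(ℙ) and every strictly increasing sequence (n_k) of integers, (1/n)·Σ_{k=1}^{n} F ∘ S^{n_k} converges in L¹(ℙ) to E[F]. Then for all A, B ∈ ℱ, ℙ(A ∩ S^{−n}B) → ℙ(A)·ℙ(B) as n → ∞ (i.e., S is mixing). -/

import Mathlib

/-!
A bounded sequence converges to `L` as soon as its Cesàro averages along every strictly
increasing subsequence converge to `L`: a subsequence converging to some `L'` has Cesàro averages
converging to `L'`, so `L' = L`. Pairing `𝟙_A` against the `L¹`-convergent averages of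
`𝟙_B ∘ S^{n_k}` shows that `a_n = ℙ(A ∩ S⁻ⁿ B)` has this property with `L = ℙ(A) ℙ(B)`.
-/

open MeasureTheory Filter Finset Topology

theorem tendsto_of_forall_strictMono_cesaro_smul {E : Type*} [NormedAddCommGroup E]
    [NormedSpace ℝ E] [ProperSpace E] {u : ℕ → E} {L : E}
    (hu : Bornology.IsBounded (Set.range u))
    (h : ∀ φ : ℕ → ℕ, StrictMono φ →
      Tendsto (fun m : ℕ => (m : ℝ)⁻¹ • ∑ k ∈ range m, u (φ k)) atTop (𝓝 L)) :
    Tendsto u atTop (𝓝 L) := by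
  refine tendsto_of_subseq_tendsto fun ns hns => ?_
  obtain ⟨φ, hφ, hnsφ⟩ := strictMono_subseq_of_tendsto_atTop hns
  obtain ⟨L', -, ψ, hψ, hL'⟩ :=
    tendsto_subseq_of_bounded hu fun k => Set.mem_range_self (ns (φ k))
  obtain rfl : L' = L := tendsto_nhds_unique hL'.cesaro_smul (h _ (hnsφ.comp hψ))
  exact ⟨φ ∘ ψ, hL'⟩

theorem tendsto_setIntegral_of_tendsto_integral_abs_sub {Ω ι : Type*} [MeasurableSpace Ω]
    {μ : Measure Ω} [IsFiniteMeasure μ] {l : Filter ι} {f : ι → Ω → ℝ} {c : ℝ}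
    (hf : ∀ i, Integrable (f i) μ) (h : Tendsto (fun i => ∫ ω, |f i ω - c| ∂μ) l (𝓝 0))
    (A : Set Ω) :
    Tendsto (fun i => ∫ ω in A, f i ω ∂μ) l (𝓝 (μ.real A * c)) := by
  rw [tendsto_iff_norm_sub_tendsto_zero]
  refine squeeze_zero (fun _ => norm_nonneg _) (fun i => ?_) h
  have hfc : Integrable (fun ω => f i ω - c) μ := (hf i).sub (integrable_const c)
  calc ‖∫ ω in A, f i ω ∂μ - μ.real A * c‖ = ‖∫ ω in A, (f i ω - c) ∂μ‖ := by
        rw [integral_sub (hf i).integrableOn (integrable_const c), setIntegral_const, smul_eq_mul]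
    _ ≤ ∫ ω in A, |f i ω - c| ∂μ := norm_integral_le_integral_norm _
    _ ≤ ∫ ω, |f i ω - c| ∂μ :=
        setIntegral_le_integral hfc.abs (Eventually.of_forall fun _ => abs_nonneg _)

theorem setIntegral_indicator_one_comp {Ω Ω' : Type*} [MeasurableSpace Ω] [MeasurableSpace Ω']
    {μ : Measure Ω} {T : Ω → Ω'} (hT : Measurable T) {B : Set Ω'} (hB : MeasurableSet B)
    (A : Set Ω) :
    ∫ ω in A, B.indicator 1 (T ω) ∂μ = μ.real (A ∩ T ⁻¹' B) := by
  change ∫ ω in A, (T ⁻¹' B).indicator 1 ω ∂μ = _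
  rw [setIntegral_indicator (hT hB)]
  simp

theorem mixing_of_blum_hanson {Ω : Type*} [MeasurableSpace Ω]
    (ℙ : Measure Ω) [IsProbabilityMeasure ℙ] (S : Ω → Ω)
    (hS : MeasurePreserving S ℙ ℙ)
    (hBH : ∀ F : Ω → ℝ, Integrable F ℙ → ∀ n : ℕ → ℕ, StrictMono n →
      Tendsto (fun m : ℕ =>
          ∫ ω, |(m : ℝ)⁻¹ * (∑ k ∈ Finset.range m, F (S^[n k] ω)) - ∫ ω', F ω' ∂ℙ| ∂ℙ)
        atTop (nhds 0)) :
    ∀ A B : Set Ω, MeasurableSet A → MeasurableSet B →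
      Tendsto (fun n : ℕ => (ℙ (A ∩ S^[n] ⁻¹' B)).toReal) atTop
        (nhds ((ℙ A).toReal * (ℙ B).toReal)) := by
  intro A B _ hB
  simp only [← measureReal_def]
  have hF : Integrable (B.indicator (1 : Ω → ℝ)) ℙ := (integrable_const 1).indicator hB
  have hFS (j : ℕ) : Integrable (fun ω => B.indicator (1 : Ω → ℝ) (S^[j] ω)) ℙ :=
    (hS.iterate j).integrable_comp_of_integrable hF
  refine tendsto_of_forall_strictMono_cesaro_smul ?_ fun n hn => ?_
  · refine (Metric.isBounded_Icc (0 : ℝ) 1).subset ?_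
    rintro _ ⟨j, rfl⟩
    exact ⟨measureReal_nonneg, measureReal_le_one⟩
  · have hlim := tendsto_setIntegral_of_tendsto_integral_abs_sub
      (fun m => ((integrable_finsetSum _ fun k _ => hFS (n k)).const_mul ((m : ℕ) : ℝ)⁻¹))
      (hBH _ hF n hn) A
    rw [integral_indicator_one hB] at hlim
    refine hlim.congr fun m => ?_
    rw [integral_const_mul, integral_finsetSum _ fun k _ => (hFS (n k)).integrableOn]
    simp only [setIntegral_indicator_one_comp (hS.iterate _).measurable hB, smul_eq_mul]
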